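/- Fix d ≥ 1 and ψ_S ∈ ℂ^d of Euclidean norm 1. Let (M_j)_{j≥1} be a sequence in M_d(ℂ) with M_j ψ_S = ψ_S for all j, and suppose C_0 := sup { ‖M_{j_n} ⋯ M_{j_1}‖ : n ∈ ℕ*, j_k ∈ ℕ* } is finite (Euclidean operator norm). For each j, the Cesàro limit ψ_j := lim_{N→∞} (1/N) Σ_{k=0}^{N−1} (M_j^*)^k ψ_S exists; set P_j := |ψ_S⟩⟨ψ_j|, Q_j := I − P_j, M_{Q_j} := Q_j M_j Q_j, Ψ_n := M_1 ⋯ M_n and θ_n := M_n^* ⋯ M_2^* ψ_1. Then: (1) ‖Ψ_n‖ ≤ C_0 for all n; (2) ‖P_j‖ = ‖ψ_j‖ ≤ C_0 and ‖Q_j‖ ≤ 1 + C_0 for all j; (3) sup { ‖M_{Q_{j_n}} M_{Q_{j_{n−1}}} ⋯ M_{Q_{j_1}}‖ : n ∈ ℕ*, j_k ∈ ℕ* } ≤ C_0 (1 + C_0); (4) ‖θ_n‖ ≤ C_0² for all n. -/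

import Mathlib

open scoped BigOperators
open MeasureTheory Filter ContinuousLinearMap

noncomputable section

abbrev Evec (d : ℕ) := EuclideanSpace ℂ (Fin d)
abbrev Op (d : ℕ) := Evec d →L[ℂ] Evec d

/-- `ketBra u v = |u⟩⟨v|`, the rank-one operator `x ↦ ⟪v, x⟫ • u`. -/
def ketBra {d : ℕ} (u v : Evec d) : Op d := (innerSL ℂ v).smulRight u

/-
The vector ψ_j is the limit of the Cesàro means of T = M_j^*, whose powers are bounded by C₀ since
taking adjoints preserves the norm. For a power-bounded operator, ker (T - 1) and range (T - 1)
meet only in 0 (on a fixed vector the means are constant, on (T - 1) w they equal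
(T^N w - w)/N → 0), so in finite dimension they span the space and the means converge; they are
bounded by C₀, hence so is ψ_j.

Because M_j fixes ψ_S, ⟪ψ_j, ψ_S⟫ = ⟪ψ_S, ψ_S⟫ = 1, so P_j ψ_S = ψ_S, which gives
P_a P_b = P_b and M_a P_b = P_b. Then Q_a M_a Q_b = Q_a M_a, so in a product of compressions
every Q but the leftmost one disappears, leaving Q M ⋯ M, of norm at most (1 + C₀) C₀. Finally θ_n is the adjoint of a product of the M_j applied to ψ_1.
-/

open Topology

section CesaroMean

variable {𝕜 E : Type*} [RCLike 𝕜] [NormedAddCommGroup E] [NormedSpace 𝕜 E]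

def cesaroMean (T : E →L[𝕜] E) (N : ℕ) : E →L[𝕜] E :=
  (N : 𝕜)⁻¹ • ∑ k ∈ Finset.range N, T ^ k

lemma cesaroMean_apply (T : E →L[𝕜] E) (N : ℕ) (x : E) :
    cesaroMean T N x = (N : 𝕜)⁻¹ • ∑ k ∈ Finset.range N, (T ^ k) x := by
  simp [cesaroMean]

lemma cesaroMean_mul_sub_one (T : E →L[𝕜] E) (N : ℕ) :
    cesaroMean T N * (T - 1) = (N : 𝕜)⁻¹ • (T ^ N - 1) := by
  rw [cesaroMean, smul_mul_assoc, geom_sum_mul]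

variable {T : E →L[𝕜] E} {C : ℝ}

lemma cesaroMean_apply_of_isFixedPt {u : E} (hu : T u = u) {N : ℕ} (hN : N ≠ 0) :
    cesaroMean T N u = u := by
  have hpow : ∀ k, (T ^ k) u = u := fun k => by
    rw [FunLike.coe_pow_eq_iterate]; exact Function.IsFixedPt.iterate hu k
  simp [cesaroMean_apply, hpow, ← Nat.cast_smul_eq_nsmul 𝕜, smul_smul, hN]

lemma norm_cesaroMean_le (hT : ∀ k, ‖T ^ k‖ ≤ C) (N : ℕ) : ‖cesaroMean T N‖ ≤ C := by
  rcases Nat.eq_zero_or_pos N with rfl | hN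
  · simpa [cesaroMean] using (norm_nonneg _).trans (hT 0)
  calc ‖cesaroMean T N‖ ≤ (N : ℝ)⁻¹ * ∑ k ∈ Finset.range N, ‖T ^ k‖ := by
        rw [cesaroMean, norm_smul]
        simpa using mul_le_mul_of_nonneg_left (norm_sum_le _ _) (by positivity)
    _ ≤ (N : ℝ)⁻¹ * (N * C) := by
        gcongr
        simpa using Finset.sum_le_sum fun k (_ : k ∈ Finset.range N) => hT k
    _ = C := by field_simp

lemma tendsto_cesaroMean_mul_sub_one (hT : ∀ k, ‖T ^ k‖ ≤ C) :
    Tendsto (fun N => cesaroMean T N * (T - 1)) atTop (𝓝 0) := by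
  refine squeeze_zero_norm (fun N => ?_)
    (by simpa using tendsto_one_div_atTop_nhds_zero_nat.mul_const (C + 1))
  rw [cesaroMean_mul_sub_one, norm_smul]
  have : ‖T ^ N - 1‖ ≤ C + 1 := (norm_sub_le _ _).trans (add_le_add (hT N) norm_id_le)
  simpa using mul_le_mul_of_nonneg_left this (by positivity : (0 : ℝ) ≤ (N : ℝ)⁻¹)

lemma disjoint_ker_range_sub_one (hT : ∀ k, ‖T ^ k‖ ≤ C) :
    Disjoint (LinearMap.ker (T - 1).toLinearMap) (LinearMap.range (T - 1).toLinearMap) := by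
  refine Submodule.disjoint_def.2 fun v hv ⟨w, hw⟩ => ?_
  have hTv : T v = v := sub_eq_zero.1 (LinearMap.mem_ker.1 hv)
  have hlim : Tendsto (fun N => cesaroMean T N v) atTop (𝓝 0) := by
    simpa [← hw, Function.comp_def] using
      ((apply 𝕜 E w).continuous.tendsto 0).comp (tendsto_cesaroMean_mul_sub_one hT)
  refine tendsto_nhds_unique (tendsto_const_nhds.congr' ?_) hlim
  exact (eventually_ne_atTop 0).mono fun N hN => (cesaroMean_apply_of_isFixedPt hTv hN).symm

lemma sup_ker_range_sub_one [FiniteDimensional 𝕜 E] (hT : ∀ k, ‖T ^ k‖ ≤ C) :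
    LinearMap.ker (T - 1).toLinearMap ⊔ LinearMap.range (T - 1).toLinearMap = ⊤ :=
  Submodule.eq_top_of_disjoint _ _
    ((LinearMap.finrank_range_add_finrank_ker _).symm.trans (add_comm _ _)).le
    (disjoint_ker_range_sub_one hT)

theorem exists_tendsto_cesaroMean [FiniteDimensional 𝕜 E] (hT : ∀ k, ‖T ^ k‖ ≤ C) (x : E) :
    ∃ u, Tendsto (fun N => cesaroMean T N x) atTop (𝓝 u) := by
  obtain ⟨u, hu, _, ⟨w, rfl⟩, rfl⟩ :=
    Submodule.mem_sup.1 ((sup_ker_range_sub_one hT).symm ▸ Submodule.mem_top : x ∈ _)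
  have hTu : T u = u := sub_eq_zero.1 (LinearMap.mem_ker.1 hu)
  refine ⟨u + 0, Tendsto.congr' ?_ (tendsto_const_nhds.add
    (((apply 𝕜 E w).continuous.tendsto 0).comp (tendsto_cesaroMean_mul_sub_one hT)))⟩
  filter_upwards [eventually_ne_atTop 0] with N hN
  simp [cesaroMean_apply_of_isFixedPt hTu hN]

lemma norm_le_of_tendsto_cesaroMean (hT : ∀ k, ‖T ^ k‖ ≤ C) {x u : E}
    (hu : Tendsto (fun N => cesaroMean T N x) atTop (𝓝 u)) : ‖u‖ ≤ C * ‖x‖ :=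
  le_of_tendsto' hu.norm fun N =>
    (le_opNorm _ x).trans (mul_le_mul_of_nonneg_right (norm_cesaroMean_le hT N) (norm_nonneg x))

end CesaroMean

section Adjoint

variable {𝕜 E : Type*} [RCLike 𝕜] [NormedAddCommGroup E] [InnerProductSpace 𝕜 E] [CompleteSpace E]

lemma adjoint_cesaroMean (T : E →L[𝕜] E) (N : ℕ) :
    adjoint (cesaroMean T N) = cesaroMean (adjoint T) N := by
  simp [← star_eq_adjoint, cesaroMean, star_sum, star_pow]

lemma inner_eq_of_tendsto_cesaroMean_adjoint {T : E →L[𝕜] E} {x y ψ : E}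
    (hψ : Tendsto (fun N => cesaroMean (adjoint T) N x) atTop (𝓝 ψ)) (hy : T y = y) :
    inner 𝕜 ψ y = inner 𝕜 x y := by
  refine tendsto_nhds_unique (hψ.inner tendsto_const_nhds) (tendsto_const_nhds.congr' ?_)
  filter_upwards [eventually_ne_atTop 0] with N hN
  rw [← adjoint_cesaroMean, adjoint_inner_left, cesaroMean_apply_of_isFixedPt hy hN]

end Adjoint

lemma norm_list_prod_map_le_of_ofFn {A ι : Type*} [NormedRing A] {M : ι → A} {C : ℝ}
    (hM : ∀ n, 1 ≤ n → ∀ j : Fin n → ι, ‖(List.ofFn fun i => M (j i)).prod‖ ≤ C)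
    (h1 : ‖(1 : A)‖ ≤ C) (l : List ι) : ‖(l.map M).prod‖ ≤ C := by
  rcases eq_or_ne l [] with rfl | hl
  · simpa using h1
  simpa [← List.map_ofFn] using hM l.length (List.length_pos_iff.2 hl) l.get

lemma norm_list_prod_map_star_le {A ι : Type*} [NormedRing A] [StarRing A] [NormedStarGroup A]
    {M : ι → A} {C : ℝ} (hC : ∀ l : List ι, ‖(l.map M).prod‖ ≤ C) (l : List ι) :
    ‖(l.map fun i => star (M i)).prod‖ ≤ C := by
  suffices star (l.reverse.map M).prod = (l.map fun i => star (M i)).prod by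
    rw [← this, norm_star]; exact hC _
  induction l with
  | nil => simp
  | cons a l ih =>
    rw [List.reverse_cons, List.map_append, List.prod_append, star_mul, ih]
    simp

lemma list_prod_map_one_sub_mul_mul_one_sub {R ι : Type*} [Ring R] {P M : ι → R}
    (hP : ∀ a b, P a * P b = P b) (hM : ∀ a b, M a * P b = P b) (a : ι) (l : List ι) :
    ((a :: l).map fun i => (1 - P i) * M i * (1 - P i)).prod =
      (1 - P a) * ((a :: l).map M).prod := by
  have hQMQ : ∀ a b, (1 - P a) * M a * (1 - P b) = (1 - P a) * M a := fun a b => by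
    simp [mul_sub, sub_mul, mul_assoc, hM, hP]
  induction l generalizing a with
  | nil => simp [hQMQ]
  | cons b l ih =>
    simp only [List.map_cons, List.prod_cons] at ih ⊢
    rw [ih, ← mul_assoc, hQMQ, hQMQ, mul_assoc]

lemma norm_ofFn_prod_one_sub_mul_mul_one_sub_le {A ι : Type*} [NormedRing A] {P M : ι → A}
    {B C : ℝ} (hP : ∀ a b, P a * P b = P b) (hM : ∀ a b, M a * P b = P b)
    (hQ : ∀ a, ‖1 - P a‖ ≤ B) (hC : ∀ l : List ι, ‖(l.map M).prod‖ ≤ C)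
    {n : ℕ} (hn : 1 ≤ n) (j : Fin n → ι) :
    ‖(List.ofFn fun i => (1 - P (j i)) * M (j i) * (1 - P (j i))).prod‖ ≤ C * B := by
  obtain ⟨a, l, hl⟩ := List.exists_cons_of_ne_nil
    (List.ofFn_eq_nil_iff (f := j) |>.not.2 (by omega))
  rw [show (List.ofFn fun i => (1 - P (j i)) * M (j i) * (1 - P (j i)))
      = (List.ofFn j).map fun i => (1 - P i) * M i * (1 - P i) by
        rw [List.map_ofFn]; rfl,
    hl, list_prod_map_one_sub_mul_mul_one_sub hP hM, mul_comm C]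
  exact (norm_mul_le _ _).trans
    (mul_le_mul (hQ a) (hC _) (norm_nonneg _) ((norm_nonneg _).trans (hQ a)))

section KetBra

variable {d : ℕ}

lemma ketBra_apply (u v x : Evec d) : ketBra u v x = inner ℂ v x • u := rfl

lemma norm_ketBra (u v : Evec d) : ‖ketBra u v‖ = ‖v‖ * ‖u‖ := by
  rw [ketBra, norm_smulRight_apply, innerSL_apply_norm]

lemma mul_ketBra (A : Op d) (u v : Evec d) : A * ketBra u v = ketBra (A u) v := by
  ext1 x
  simp [ketBra_apply]

end KetBra

theorem stmt4_general {d : ℕ} (ψS : Evec d) (hψS : ‖ψS‖ = 1)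
    (M : ℕ → Op d) (hfix : ∀ j, M j ψS = ψS)
    (C₀ : ℝ)
    (hC₀ : ∀ (n : ℕ), 1 ≤ n → ∀ j : Fin n → ℕ,
      ‖(List.ofFn fun i => M (j i)).prod‖ ≤ C₀) :
    ∃ ψ : ℕ → Evec d,
      (∀ j : ℕ, Tendsto
        (fun N : ℕ => (N : ℂ)⁻¹ • ∑ k ∈ Finset.range N, (adjoint (M j) ^ k) ψS)
        atTop (nhds (ψ j))) ∧
      (∀ (n : ℕ), 1 ≤ n → ‖(List.ofFn fun i : Fin n => M i).prod‖ ≤ C₀) ∧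
      (∀ j : ℕ, ‖ketBra ψS (ψ j)‖ = ‖ψ j‖ ∧ ‖ψ j‖ ≤ C₀ ∧
        ‖1 - ketBra ψS (ψ j)‖ ≤ 1 + C₀) ∧
      (∀ (n : ℕ), 1 ≤ n → ∀ j : Fin n → ℕ,
        ‖(List.ofFn fun i =>
            (1 - ketBra ψS (ψ (j i))) * M (j i) * (1 - ketBra ψS (ψ (j i)))).prod‖
          ≤ C₀ * (1 + C₀)) ∧
      (∀ (n : ℕ), 1 ≤ n →
        ‖((List.ofFn fun i : Fin (n - 1) => adjoint (M (n - 1 - i))).prod) (ψ 0)‖ ≤ C₀ ^ 2) := by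
  have hC₁ : 1 ≤ C₀ := by
    have h := (M 0).le_opNorm ψS
    rw [hfix, hψS, mul_one] at h
    exact h.trans (by simpa using hC₀ 1 le_rfl fun _ => 0)
  have hprod : ∀ l : List ℕ, ‖(l.map M).prod‖ ≤ C₀ :=
    norm_list_prod_map_le_of_ofFn hC₀ (norm_id_le.trans hC₁)
  have hprod_adj : ∀ l : List ℕ, ‖(l.map fun i => adjoint (M i)).prod‖ ≤ C₀ := by
    simpa only [star_eq_adjoint] using norm_list_prod_map_star_le hprod
  have hpow : ∀ j k, ‖adjoint (M j) ^ k‖ ≤ C₀ := fun j k => by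
    simpa [List.map_replicate] using hprod_adj (List.replicate k j)
  choose ψ hψ using fun j => exists_tendsto_cesaroMean (hpow j) ψS
  have hψ_norm : ∀ j, ‖ψ j‖ ≤ C₀ := fun j => by
    simpa [hψS] using norm_le_of_tendsto_cesaroMean (hpow j) (hψ j)
  have hP_fix : ∀ j, ketBra ψS (ψ j) ψS = ψS := fun j => by
    rw [ketBra_apply, inner_eq_of_tendsto_cesaroMean_adjoint (hψ j) (hfix j),
      inner_self_eq_norm_sq_to_K, hψS]
    simp
  have hQ_norm : ∀ j, ‖1 - ketBra ψS (ψ j)‖ ≤ 1 + C₀ := fun j =>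
    (norm_sub_le _ _).trans (add_le_add norm_id_le (by simpa [norm_ketBra, hψS] using hψ_norm j))
  refine ⟨ψ, fun j => by simpa [cesaroMean_apply] using hψ j, fun n hn => hC₀ n hn _,
    fun j => ⟨by simp [norm_ketBra, hψS], hψ_norm j, hQ_norm j⟩,
    fun n hn j => norm_ofFn_prod_one_sub_mul_mul_one_sub_le (P := fun i => ketBra ψS (ψ i))
      (fun a b => by rw [mul_ketBra, hP_fix]) (fun a b => by rw [mul_ketBra, hfix]) hQ_norm hprod
      hn j,
    fun n _ => ?_⟩
  have hθ := hprod_adj (List.ofFn fun i : Fin (n - 1) => n - 1 - (i : ℕ))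
  rw [List.map_ofFn] at hθ
  exact ((le_opNorm _ _).trans
    (mul_le_mul hθ (hψ_norm 0) (norm_nonneg _) (by linarith))).trans_eq (sq C₀).symm

/-- uniform bounds. The sequence `(M_j)_{j≥1}` of the paper is indexed here by
`j : ℕ`.  Under the uniform bound `C₀` on all finite products, the Cesàro limits
`ψ_j = lim (1/N) Σ_{k<N} (M_j^*)^k ψ_S` exist, and with `P_j = |ψ_S⟩⟨ψ_j|`, `Q_j = 1 - P_j`,
`M_{Q_j} = Q_j M_j Q_j`, `Ψ_n = M_1 ⋯ M_n`, `θ_n = M_n^* ⋯ M_2^* ψ_1`: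
(1) `‖Ψ_n‖ ≤ C₀`; (2) `‖P_j‖ = ‖ψ_j‖ ≤ C₀`, `‖Q_j‖ ≤ 1 + C₀`;
(3) products of the `M_{Q_j}` are bounded by `C₀(1+C₀)`; (4) `‖θ_n‖ ≤ C₀²`. -/
theorem stmt4 {d : ℕ} (hd : 1 ≤ d) (ψS : Evec d) (hψS : ‖ψS‖ = 1)
    (M : ℕ → Op d) (hfix : ∀ j, M j ψS = ψS)
    (C₀ : ℝ)
    (hC₀ : ∀ (n : ℕ), 1 ≤ n → ∀ j : Fin n → ℕ,
      ‖(List.ofFn fun i => M (j i)).prod‖ ≤ C₀) :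
    ∃ ψ : ℕ → Evec d,
      (∀ j : ℕ, Tendsto
        (fun N : ℕ => (N : ℂ)⁻¹ • ∑ k ∈ Finset.range N, (adjoint (M j) ^ k) ψS)
        atTop (nhds (ψ j))) ∧
      (∀ (n : ℕ), 1 ≤ n → ‖(List.ofFn fun i : Fin n => M i).prod‖ ≤ C₀) ∧
      (∀ j : ℕ, ‖ketBra ψS (ψ j)‖ = ‖ψ j‖ ∧ ‖ψ j‖ ≤ C₀ ∧
        ‖1 - ketBra ψS (ψ j)‖ ≤ 1 + C₀) ∧
      (∀ (n : ℕ), 1 ≤ n → ∀ j : Fin n → ℕ,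
        ‖(List.ofFn fun i =>
            (1 - ketBra ψS (ψ (j i))) * M (j i) * (1 - ketBra ψS (ψ (j i)))).prod‖
          ≤ C₀ * (1 + C₀)) ∧
      (∀ (n : ℕ), 1 ≤ n →
        ‖((List.ofFn fun i : Fin (n - 1) => adjoint (M (n - 1 - i))).prod) (ψ 0)‖ ≤ C₀ ^ 2) :=
  stmt4_general ψS hψS M hfix C₀ hC₀
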